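/- arXiv:1812.11634 — 7 statements merged into one kernel-verified Lean document; each statement's English description precedes it below -/
import Mathlib

section
/- Let (a_n) and (b_n) be sequences of strictly positive reals such that the power series ∑ a_n z^n and ∑ b_n z^n converge for all real z ≥ 0, and suppose the sequence (a_n / b_n) is strictly decreasing. Then the function z ↦ (∑_{n≥0} a_n z^n) / (∑_{n≥0} b_n z^n) is strictly decreasing on (0, ∞). -/
private lemma pow_cross {x y : ℝ} (hx : 0 < x) (hxy : x < y) {m n : ℕ} (h : m < n) :
    x ^ n * y ^ m < x ^ m * y ^ n := by
  obtain ⟨k, rfl⟩ : ∃ k, n = m + (k + 1) := ⟨n - m - 1, by omega⟩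
  have hy : 0 < y := hx.trans hxy
  have h1 : x ^ (k + 1) < y ^ (k + 1) := pow_lt_pow_left₀ hxy hx.le (by omega)
  calc x ^ (m + (k + 1)) * y ^ m = x ^ (k + 1) * (x ^ m * y ^ m) := by ring
    _ < y ^ (k + 1) * (x ^ m * y ^ m) :=
        mul_lt_mul_of_pos_right h1 (by positivity)
    _ = x ^ m * y ^ (m + (k + 1)) := by ring

set_option maxHeartbeats 1000000 in
theorem stmt_0 (a b : ℕ → ℝ)
    (ha : ∀ n, 0 < a n) (hb : ∀ n, 0 < b n)
    (hsa : ∀ z : ℝ, 0 ≤ z → Summable (fun n => a n * z ^ n))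
    (hsb : ∀ z : ℝ, 0 ≤ z → Summable (fun n => b n * z ^ n))
    (hratio : StrictAnti (fun n => a n / b n)) :
    StrictAntiOn (fun z : ℝ => (∑' n, a n * z ^ n) / (∑' n, b n * z ^ n))
      (Set.Ioi (0 : ℝ)) := by
  -- cross products of the coefficients
  have hcross : ∀ {m n : ℕ}, m < n → a n * b m < a m * b n := by
    intro m n hmn
    have := hratio hmn
    rwa [div_lt_div_iff₀ (hb n) (hb m)] at this
  intro x hx y hy hxy
  simp only [Set.mem_Ioi] at hx hy
  have hy0 : 0 < y := hy
  have hx0 : 0 < x := hx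
  -- positivity of denominators
  have hBx : 0 < ∑' n, b n * x ^ n :=
    Summable.tsum_pos (hsb x hx0.le) (fun n => (mul_pos (hb n) (pow_pos hx0 n)).le) 0
      (mul_pos (hb 0) (pow_pos hx0 0))
  have hBy : 0 < ∑' n, b n * y ^ n :=
    Summable.tsum_pos (hsb y hy0.le) (fun n => (mul_pos (hb n) (pow_pos hy0 n)).le) 0
      (mul_pos (hb 0) (pow_pos hy0 0))
  simp only
  rw [div_lt_div_iff₀ hBy hBx]
  -- summability of the product families
  have hf1 : Summable (fun p : ℕ × ℕ => (a p.1 * x ^ p.1) * (b p.2 * y ^ p.2)) :=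
    (hsa x hx0.le).mul_of_nonneg (hsb y hy0.le)
      (fun n => (mul_pos (ha n) (pow_pos hx0 n)).le)
      (fun n => (mul_pos (hb n) (pow_pos hy0 n)).le)
  have hf2 : Summable (fun p : ℕ × ℕ => (a p.1 * y ^ p.1) * (b p.2 * x ^ p.2)) :=
    (hsa y hy0.le).mul_of_nonneg (hsb x hx0.le)
      (fun n => (mul_pos (ha n) (pow_pos hy0 n)).le)
      (fun n => (mul_pos (hb n) (pow_pos hx0 n)).le)
  set h : ℕ × ℕ → ℝ :=
    fun p => a p.1 * b p.2 * (x ^ p.1 * y ^ p.2 - y ^ p.1 * x ^ p.2) with hh_def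
  have hh : Summable h := by
    have := hf1.sub hf2
    refine this.congr fun p => ?_
    simp only [hh_def]; ring
  have hEq1 : (∑' n, a n * x ^ n) * (∑' n, b n * y ^ n)
      = ∑' p : ℕ × ℕ, (a p.1 * x ^ p.1) * (b p.2 * y ^ p.2) :=
    Summable.tsum_mul_tsum (hsa x hx0.le) (hsb y hy0.le) hf1
  have hEq2 : (∑' n, a n * y ^ n) * (∑' n, b n * x ^ n)
      = ∑' p : ℕ × ℕ, (a p.1 * y ^ p.1) * (b p.2 * x ^ p.2) :=
    Summable.tsum_mul_tsum (hsa y hy0.le) (hsb x hx0.le) hf2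
  have hdiff : (∑' n, a n * x ^ n) * (∑' n, b n * y ^ n)
      - (∑' n, a n * y ^ n) * (∑' n, b n * x ^ n) = ∑' p, h p := by
    rw [hEq1, hEq2, ← Summable.tsum_sub hf1 hf2]
    refine tsum_congr fun p => ?_
    simp only [hh_def]; ring
  -- the symmetrized family
  set g : ℕ × ℕ → ℝ :=
    fun p => (a p.1 * b p.2 - a p.2 * b p.1) * (x ^ p.1 * y ^ p.2 - x ^ p.2 * y ^ p.1)
    with hg_def
  have hhswap : Summable (fun p : ℕ × ℕ => h p.swap) :=
    (Equiv.prodComm ℕ ℕ).summable_iff.mpr hh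
  have hg : Summable g := by
    refine (hh.add hhswap).congr fun p => ?_
    simp only [hh_def, hg_def, Prod.fst_swap, Prod.snd_swap]; ring
  have hgswap : ∑' p : ℕ × ℕ, h p.swap = ∑' p, h p :=
    (Equiv.prodComm ℕ ℕ).tsum_eq h
  have htwo : (∑' p, h p) + (∑' p, h p) = ∑' p, g p := by
    nth_rewrite 2 [← hgswap]
    rw [← Summable.tsum_add hh hhswap]
    refine tsum_congr fun p => ?_
    simp only [hh_def, hg_def, Prod.fst_swap, Prod.snd_swap]; ring
  have hgnonneg : ∀ p : ℕ × ℕ, 0 ≤ g p := by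
    rintro ⟨m, n⟩
    simp only [hg_def]
    rcases lt_trichotomy m n with hmn | rfl | hmn
    · have h1 : 0 < a m * b n - a n * b m := sub_pos.mpr (hcross hmn)
      have h2 : 0 < x ^ m * y ^ n - x ^ n * y ^ m := sub_pos.mpr (pow_cross hx0 hxy hmn)
      positivity
    · simp
    · have h1 : a m * b n - a n * b m < 0 := sub_neg.mpr (hcross hmn)
      have h2 : x ^ m * y ^ n - x ^ n * y ^ m < 0 := sub_neg.mpr (pow_cross hx0 hxy hmn)
      exact (mul_pos_of_neg_of_neg h1 h2).le
  have hgpos : 0 < ∑' p, g p := by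
    refine Summable.tsum_pos hg hgnonneg (0, 1) ?_
    simp only [hg_def]
    have h1 : 0 < a 0 * b 1 - a 1 * b 0 := sub_pos.mpr (hcross Nat.zero_lt_one)
    have h2 : 0 < x ^ 0 * y ^ 1 - x ^ 1 * y ^ 0 := by
      simp only [pow_zero, pow_one, one_mul, mul_one]; linarith
    exact mul_pos h1 h2
  have : 0 < ∑' p, h p := by linarith
  linarith [hdiff, this]
end

section
/- If β ≥ 1 and 0 < a < b < 1, then (log b − log a) / log(1/a) > β⁻¹ (b − a) / b^{1 − 1/β}. -/
theorem stmt_1 (β a b : ℝ) (hβ : 1 ≤ β) (ha : 0 < a) (hab : a < b) (hb : b < 1) :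
    β⁻¹ * (b - a) / b ^ (1 - 1 / β) < (Real.log b - Real.log a) / Real.log (1 / a) := by
  have hβ0 : 0 < β := lt_of_lt_of_le one_pos hβ
  set t : ℝ := 1 / β with ht_def
  have ht0 : 0 < t := by positivity
  have ht1 : t ≤ 1 := by
    rw [ht_def, div_le_one hβ0]; exact hβ
  have hb0 : 0 < b := ha.trans hab
  set u : ℝ := a ^ t with hu_def
  set v : ℝ := b ^ t with hv_def
  have hu0 : 0 < u := Real.rpow_pos_of_pos ha t
  have hv0 : 0 < v := Real.rpow_pos_of_pos hb0 t
  have huv : u < v := Real.rpow_lt_rpow ha.le hab ht0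
  have hv1 : v < 1 := by
    calc v < 1 ^ t := Real.rpow_lt_rpow hb0.le hb ht0
    _ = 1 := Real.one_rpow t
  have hu1 : u < 1 := huv.trans hv1
  have hB : (0:ℝ) < b ^ (1 - t) := Real.rpow_pos_of_pos hb0 _
  have hL : 0 < Real.log (1 / a) := Real.log_pos (by rw [one_div, lt_inv_comm₀ one_pos ha]; simpa using lt_trans hab hb)
  have hLa : Real.log (1 / a) = -Real.log a := by rw [one_div, Real.log_inv]
  have hD : 0 < Real.log b - Real.log a := by
    have := Real.log_lt_log ha hab; linarith
  -- Fact 1 : b - a ≤ β * b ^ (1 - t) * (v - u)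
  have fact1 : b - a ≤ β * b ^ (1 - t) * (v - u) := by
    have hber : (1 + (a / b - 1)) ^ t ≤ 1 + t * (a / b - 1) := by
      apply rpow_one_add_le_one_add_mul_self _ ht0.le ht1
      have : 0 < a / b := by positivity
      linarith
    have hab' : (1 + (a / b - 1)) ^ t = u / v := by
      rw [show (1 + (a / b - 1)) = a / b by ring, Real.div_rpow ha.le hb0.le]
    rw [hab'] at hber
    -- u/v ≤ 1 + t*(a/b-1)  ⟹  t*(b-a)/b ≤ (v-u)/v
    have h1 : t * (b - a) / b ≤ (v - u) / v := by
      have h2 : 1 - u / v ≥ t * (1 - a / b) := by linarith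
      have h3 : 1 - u / v = (v - u) / v := by field_simp
      have h4 : t * (1 - a / b) = t * (b - a) / b := by field_simp
      rw [h3, h4] at h2; linarith
    have h5 : t * (b - a) * v ≤ (v - u) * b := by
      rw [div_le_div_iff₀ hb0 hv0] at h1; linarith
    have hbv : b ^ (1 - t) * v = b := by
      rw [hv_def, ← Real.rpow_add hb0]; norm_num
    have hβt : β * t = 1 := by
      rw [ht_def]; field_simp
    have h7 := mul_le_mul_of_nonneg_left h5 hβ0.le
    have h6 : (b - a) * v ≤ β * b ^ (1 - t) * (v - u) * v := by
      calc (b - a) * v = β * t * ((b - a) * v) := by rw [hβt]; ring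
        _ = β * (t * (b - a) * v) := by ring
        _ ≤ β * ((v - u) * b) := h7
        _ = β * ((v - u) * (b ^ (1 - t) * v)) := by rw [hbv]
        _ = β * b ^ (1 - t) * (v - u) * v := by ring
    exact le_of_mul_le_mul_right h6 hv0
  -- Fact 2 : (v - u) * Real.log (1 / a) < Real.log b - Real.log a
  have fact2 : (v - u) * Real.log (1 / a) < Real.log b - Real.log a := by
    set s : ℝ := 1 + u - v with hs_def
    have hs0 : 0 < s := by linarith
    have hs1 : s < 1 := by linarith
    have husv : u ^ s < v := by
      have hber : (1 + (u - 1)) ^ s ≤ 1 + s * (u - 1) :=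
        rpow_one_add_le_one_add_mul_self (by linarith) hs0.le hs1.le
      have h1 : (1 + (u - 1)) ^ s = u ^ s := by norm_num
      rw [h1] at hber
      have h2 : s * u < u := by nlinarith
      nlinarith
    have hlog : s * Real.log u < Real.log v := by
      have := Real.log_lt_log (Real.rpow_pos_of_pos hu0 s) husv
      rwa [Real.log_rpow hu0] at this
    have hlu : Real.log u = t * Real.log a := Real.log_rpow ha t
    have hlv : Real.log v = t * Real.log b := Real.log_rpow hb0 t
    rw [hlu, hlv, hs_def] at hlog
    -- (1 + u - v) * t * log a < t * log b
    have h6 : (v - u) * (-Real.log a) < Real.log b - Real.log a := by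
      have ht0' : (0:ℝ) < t := ht0
      have h7 : (1 + u - v) * Real.log a < Real.log b := by
        have := (mul_lt_mul_iff_right₀ (show (0:ℝ) < β from hβ0)).mpr hlog
        have hβt : β * t = 1 := by rw [ht_def]; field_simp
        calc (1 + u - v) * Real.log a = β * ((1 + u - v) * (t * Real.log a)) := by
              rw [show β * ((1 + u - v) * (t * Real.log a)) = (β * t) * ((1+u-v) * Real.log a) by ring, hβt]; ring
          _ < β * (t * Real.log b) := this
          _ = Real.log b := by rw [show β * (t * Real.log b) = (β * t) * Real.log b by ring, hβt, one_mul]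
      nlinarith [h7]
    rwa [hLa]
  -- combine
  rw [div_lt_div_iff₀ hB hL]
  have key : β⁻¹ * (b - a) * Real.log (1 / a)
      ≤ b ^ (1 - t) * ((v - u) * Real.log (1 / a)) := by
    have h8 : β⁻¹ * (b - a) ≤ b ^ (1 - t) * (v - u) := by
      have h := mul_le_mul_of_nonneg_left fact1 (by positivity : (0:ℝ) ≤ β⁻¹)
      have hβi : β⁻¹ * β = 1 := inv_mul_cancel₀ hβ0.ne'
      calc β⁻¹ * (b - a) ≤ β⁻¹ * (β * b ^ (1 - t) * (v - u)) := h
        _ = β⁻¹ * β * (b ^ (1 - t) * (v - u)) := by ring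
        _ = b ^ (1 - t) * (v - u) := by rw [hβi, one_mul]
    calc β⁻¹ * (b - a) * Real.log (1 / a) ≤ b ^ (1 - t) * (v - u) * Real.log (1 / a) :=
          mul_le_mul_of_nonneg_right h8 hL.le
      _ = b ^ (1 - t) * ((v - u) * Real.log (1 / a)) := by ring
  calc β⁻¹ * (b - a) * Real.log (1 / a)
      ≤ b ^ (1 - t) * ((v - u) * Real.log (1 / a)) := key
    _ < b ^ (1 - t) * (Real.log b - Real.log a) := by
        exact (mul_lt_mul_iff_right₀ hB).mpr fact2
    _ = (Real.log b - Real.log a) * b ^ (1 - t) := by ring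
end

section
/- Let K be a subset of a topological space E, and let K₁, …, K_ℓ ⊆ E be closed sets such that the closure of the interior of K equals K₁ ∪ ⋯ ∪ K_ℓ. Then the closure of the interior of K equals the union of those K_j whose interior is non-empty, and moreover ⋃_j int(K_j) is dense in cl(int K). -/
open Set

lemma aux_union {E : Type*} [TopologicalSpace E] {A B : Set E} (hA : IsClosed A) :
    interior (A ∪ B) ⊆ closure (interior A ∪ interior B) := by
  intro x hx
  rw [mem_closure_iff]
  intro U hU hxU
  by_cases h : (U ∩ interior (A ∪ B) ∩ Aᶜ).Nonempty
  · obtain ⟨y, ⟨hyU, hyI⟩, hyA⟩ := h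
    have hyB : y ∈ interior B := by
      apply mem_interior.mpr
      refine ⟨U ∩ interior (A ∪ B) ∩ Aᶜ, ?_, ?_, ⟨⟨hyU, hyI⟩, hyA⟩⟩
      · rintro z ⟨⟨-, hzI⟩, hzA⟩
        exact (interior_subset hzI).resolve_left hzA
      · exact ((hU.inter isOpen_interior).inter hA.isOpen_compl)
    exact ⟨y, hyU, Or.inr hyB⟩
  · have hsub : U ∩ interior (A ∪ B) ⊆ A := by
      intro z hz
      by_contra hzA
      exact h ⟨z, hz, hzA⟩
    have : x ∈ interior A :=
      interior_maximal hsub (hU.inter isOpen_interior) ⟨hxU, hx⟩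
    exact ⟨x, hxU, Or.inl this⟩

lemma aux_finset {E ι : Type*} [TopologicalSpace E] (f : ι → Set E)
    (s : Finset ι) (hf : ∀ i ∈ s, IsClosed (f i)) :
    interior (⋃ i ∈ s, f i) ⊆ closure (⋃ i ∈ s, interior (f i)) := by
  classical
  induction s using Finset.induction_on with
  | empty => simp
  | @insert a s ha ih =>
    simp only [Finset.mem_insert, Set.iUnion_iUnion_eq_or_left]
    calc interior (f a ∪ ⋃ i ∈ s, f i)
        ⊆ closure (interior (f a) ∪ interior (⋃ i ∈ s, f i)) :=
          aux_union (hf a (Finset.mem_insert_self a s))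
      _ ⊆ closure (interior (f a) ∪ closure (⋃ i ∈ s, interior (f i))) :=
          closure_mono (union_subset_union_right _
            (ih (fun i hi => hf i (Finset.mem_insert_of_mem hi))))
      _ ⊆ closure (closure (interior (f a) ∪ ⋃ i ∈ s, interior (f i))) :=
          closure_mono (union_subset (subset_closure.trans
            (closure_mono subset_union_left)) (closure_mono subset_union_right))
      _ = _ := closure_closure

theorem stmt_10 {E : Type*} [TopologicalSpace E] (K : Set E)
    (l : ℕ) (Ks : Fin l → Set E) (hcl : ∀ i, IsClosed (Ks i))
    (hK : closure (interior K) = ⋃ i, Ks i) :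
    closure (interior K) = (⋃ i ∈ {i : Fin l | (interior (Ks i)).Nonempty}, Ks i)
      ∧ closure (interior K) ⊆ closure (⋃ i, interior (Ks i)) := by
  classical
  have hfin : interior (⋃ i, Ks i) ⊆ closure (⋃ i, interior (Ks i)) := by
    have := aux_finset Ks Finset.univ (fun i _ => hcl i)
    simpa using this
  have h1 : interior K ⊆ interior (closure (interior K)) :=
    interior_maximal subset_closure isOpen_interior
  have hmain : closure (interior K) ⊆ closure (⋃ i, interior (Ks i)) := by
    calc closure (interior K) ⊆ closure (interior (closure (interior K))) := closure_mono h1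
      _ ⊆ closure (closure (⋃ i, interior (Ks i))) := by
          rw [hK]; exact closure_mono hfin
      _ = _ := closure_closure
  refine ⟨?_, hmain⟩
  apply subset_antisymm
  · have heq : (⋃ i, interior (Ks i)) = ⋃ i ∈ {i : Fin l | (interior (Ks i)).Nonempty}, interior (Ks i) := by
      ext x
      simp only [mem_iUnion, mem_setOf_eq]
      exact ⟨fun ⟨i, hi⟩ => ⟨i, ⟨x, hi⟩, hi⟩, fun ⟨i, _, hi⟩ => ⟨i, hi⟩⟩
    have hclosed : IsClosed (⋃ i ∈ {i : Fin l | (interior (Ks i)).Nonempty}, Ks i) := by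
      apply Set.Finite.isClosed_biUnion (Set.toFinite _) (fun i _ => hcl i)
    calc closure (interior K) ⊆ closure (⋃ i, interior (Ks i)) := hmain
      _ ⊆ _ := by
          rw [heq]
          exact hclosed.closure_subset_iff.mpr
            (iUnion₂_mono fun i _ => interior_subset)
  · rw [hK]
    exact iUnion₂_subset fun i _ => subset_iUnion Ks i
end

section
/- For d ∈ ℕ and 0 < η ≤ 2^{−d}, let J_η = {x ∈ [0,1]^d : ∏_{j=1}^d min(x_j, 1−x_j) ≥ η}. Then the Lebesgue measure of [0,1]^d \ J_η equals 2^d η ∑_{ℓ=0}^{d−1} (log(2^{−d}/η))^ℓ / ℓ!. -/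
/-! Since `min x (1 - x) = tentMap x / 2` and the tent map preserves Lebesgue measure on `(0, 1]`,
the complement of `J_η` has the measure of `{y ∈ (0, 1]^d | ∏ y_j < t}` with `t = 2^d η`.
Integrating out the first coordinate `x` gives the recursion `F_{d+1}(t) = t + ∫_t^1 F_d(t/x) dx`
(for `x ≤ t` the constraint on the other coordinates is void), and the truncated exponential
series `t ∑_{l<d} log(1/t)^l / l!` satisfies it term by term. -/

open MeasureTheory Set

local notation:max "𝕌" d:max => Measure.pi fun _ : Fin d => volume.restrict (Ioc (0 : ℝ) 1)

theorem map_restrict_preimage_affine {a : ℝ} (ha : a ≠ 0) (b : ℝ) {s : Set ℝ}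
    (hs : MeasurableSet s) :
    (volume.restrict ((fun x => a * x + b) ⁻¹' s)).map (fun x => a * x + b)
      = ENNReal.ofReal |a⁻¹| • volume.restrict s := by
  have hf : Measurable (fun x : ℝ => a * x + b) := by fun_prop
  have hcomp : (fun x => a * x + b) = (· + b) ∘ (a * ·) := rfl
  rw [← Measure.restrict_map hf hs, hcomp,
    ← Measure.map_map (measurable_add_const b) (measurable_const_mul a),
    Real.map_volume_mul_left ha, Measure.map_smul, map_add_right_eq_self,
    Measure.restrict_smul]

noncomputable def tentMap (x : ℝ) : ℝ := 2 * min x (1 - x)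

theorem measurePreserving_tentMap :
    MeasurePreserving tentMap (volume.restrict (Ioc 0 1)) (volume.restrict (Ioc 0 1)) := by
  have hmeas : Measurable tentMap := by unfold tentMap; fun_prop
  refine ⟨hmeas, ?_⟩
  have hsplit : volume.restrict (Ioc (0 : ℝ) 1)
      = volume.restrict (Ioc 0 2⁻¹) + volume.restrict (Ioc 2⁻¹ 1) := by
    rw [← Measure.restrict_union (Ioc_disjoint_Ioc_of_le le_rfl) measurableSet_Ioc,
      Ioc_union_Ioc_eq_Ioc (by norm_num) (by norm_num)]
  have left : (volume.restrict (Ioc (0 : ℝ) 2⁻¹)).map tentMap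
      = ENNReal.ofReal 2⁻¹ • volume.restrict (Ioc 0 1) := by
    have hpre : Ioc (0 : ℝ) 2⁻¹ = (fun x => 2 * x + 0) ⁻¹' Ioc 0 1 := by
      ext x
      simp only [mem_Ioc, mem_preimage]
      constructor <;> rintro ⟨h₁, h₂⟩ <;> constructor <;> linarith
    have heq : tentMap =ᵐ[volume.restrict (Ioc 0 2⁻¹)] fun x => 2 * x + 0 := by
      filter_upwards [ae_restrict_mem measurableSet_Ioc] with x hx
      rw [tentMap, min_eq_left (by linarith [hx.2])]; ring
    rw [Measure.map_congr heq, hpre, map_restrict_preimage_affine two_ne_zero 0 measurableSet_Ioc]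
    norm_num
  have right : (volume.restrict (Ioc (2⁻¹ : ℝ) 1)).map tentMap
      = ENNReal.ofReal 2⁻¹ • volume.restrict (Ioc 0 1) := by
    have hpre : Ioc (2⁻¹ : ℝ) 1 = (fun x => -2 * x + 2) ⁻¹' Ico 0 1 := by
      ext x
      simp only [mem_Ioc, mem_Ico, mem_preimage]
      constructor <;> rintro ⟨h₁, h₂⟩ <;> constructor <;> linarith
    have heq : tentMap =ᵐ[volume.restrict (Ioc 2⁻¹ 1)] fun x => -2 * x + 2 := by
      filter_upwards [ae_restrict_mem measurableSet_Ioc] with x hx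
      rw [tentMap, min_eq_right (by linarith [hx.1])]; ring
    rw [Measure.map_congr heq, hpre,
      map_restrict_preimage_affine (by norm_num) 2 measurableSet_Ico,
      Measure.restrict_congr_set Ico_ae_eq_Ioc]
    norm_num
  rw [hsplit, Measure.map_add _ _ hmeas, left, right, ← add_smul,
    ← ENNReal.ofReal_add (by norm_num) (by norm_num),
    show (2⁻¹ + 2⁻¹ : ℝ) = 1 by norm_num,
    ENNReal.ofReal_one, one_smul]
  exact hsplit

noncomputable def cdfProdUniform (d : ℕ) (t : ℝ) : ℝ :=
  t * ∑ l ∈ Finset.range d, Real.log t⁻¹ ^ l / l.factorial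

theorem cdfProdUniform_nonneg (d : ℕ) {t : ℝ} (ht0 : 0 ≤ t) (ht1 : t ≤ 1) :
    0 ≤ cdfProdUniform d t := by
  have hlog : 0 ≤ Real.log t⁻¹ := by
    rw [Real.log_inv, neg_nonneg]; exact Real.log_nonpos ht0 ht1
  exact mul_nonneg ht0 (Finset.sum_nonneg fun l _ => by positivity)

theorem continuousOn_cdfProdUniform (d : ℕ) : ContinuousOn (cdfProdUniform d) (Ioi 0) := by
  refine continuousOn_id.mul (continuousOn_finsetSum _ fun l _ => ?_)
  fun_prop (disch := intro x hx; have : 0 < x := hx; positivity)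

theorem pos_of_mem_uIcc_one {t x : ℝ} (ht : 0 < t) (hx : x ∈ uIcc t 1) : 0 < x :=
  (lt_min ht one_pos).trans_le hx.1

theorem intervalIntegrable_div_mul_log_sub_pow {t : ℝ} (ht : 0 < t) (l : ℕ) :
    IntervalIntegrable (fun x => t / x * ((Real.log x - Real.log t) ^ l / l.factorial))
      volume t 1 := by
  refine ContinuousOn.intervalIntegrable ?_
  fun_prop (disch := intro x (hx : x ∈ uIcc t 1); exact (pos_of_mem_uIcc_one ht hx).ne')

theorem integral_div_mul_log_sub_pow {t : ℝ} (ht : 0 < t) (l : ℕ) :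
    ∫ x in t..1, t / x * ((Real.log x - Real.log t) ^ l / l.factorial)
      = t * Real.log t⁻¹ ^ (l + 1) / (l + 1).factorial := by
  have hderiv : ∀ x ∈ uIcc t 1,
      HasDerivAt (fun x => t * (Real.log x - Real.log t) ^ (l + 1) / (l + 1).factorial)
        (t / x * ((Real.log x - Real.log t) ^ l / l.factorial)) x := by
    intro x hx
    refine ((((Real.hasDerivAt_log (pos_of_mem_uIcc_one ht hx).ne').sub_const (Real.log t)).pow
      (l + 1)).const_mul t).div_const ((l + 1).factorial : ℝ) |>.congr_deriv ?_
    rw [Nat.add_sub_cancel, Nat.factorial_succ]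
    push_cast
    field_simp
  rw [intervalIntegral.integral_eq_sub_of_hasDerivAt hderiv
      (intervalIntegrable_div_mul_log_sub_pow ht l),
    Real.log_one, Real.log_inv]
  ring_nf

theorem cdfProdUniform_succ (d : ℕ) {t : ℝ} (ht : 0 < t) :
    cdfProdUniform (d + 1) t = t + ∫ x in t..1, cdfProdUniform d (t / x) := by
  have hterms : EqOn (fun x => cdfProdUniform d (t / x))
      (fun x => ∑ l ∈ Finset.range d, t / x * ((Real.log x - Real.log t) ^ l / l.factorial))
      (uIcc t 1) := by
    intro x hx
    have hx : 0 < x := pos_of_mem_uIcc_one ht hx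
    simp only [cdfProdUniform, Finset.mul_sum, inv_div, Real.log_div hx.ne' ht.ne']
  rw [intervalIntegral.integral_congr hterms, intervalIntegral.integral_finsetSum
    fun l _ => intervalIntegrable_div_mul_log_sub_pow ht l]
  simp only [integral_div_mul_log_sub_pow ht, cdfProdUniform, Finset.sum_range_succ', mul_add,
    Finset.mul_sum, mul_div_assoc]
  simp [add_comm]

theorem measure_pi_prod_lt_of_one_lt (d : ℕ) {s : ℝ} (hs : 1 < s) :
    𝕌 d {y | ∏ j, y j < s} = 1 := by
  have hcube : ∀ᵐ y ∂𝕌 d, ∀ j, y j ∈ Ioc 0 1 :=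
    Filter.eventually_all.2 fun j =>
      Measure.tendsto_eval_ae_ae.eventually (ae_restrict_mem measurableSet_Ioc)
  have hfull : {y : Fin d → ℝ | ∏ j, y j < s} =ᵐ[𝕌 d] (univ : Set (Fin d → ℝ)) := by
    refine Filter.eventuallyEq_univ.2 (hcube.mono fun y hy => ?_)
    exact (Finset.prod_le_one (fun j _ => (hy j).1.le) fun j _ => (hy j).2).trans_lt hs
  rw [measure_congr hfull, Measure.pi_univ]
  simp

theorem measure_pi_prod_lt_succ (d : ℕ) (t : ℝ) :
    𝕌 (d + 1) {y | ∏ j, y j < t} = ∫⁻ x in Ioc 0 1, 𝕌 d {y | ∏ j, y j < t / x} := by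
  have hA : MeasurableSet {p : ℝ × (Fin d → ℝ) | p.1 * ∏ j, p.2 j < t} :=
    measurableSet_lt (by fun_prop) measurable_const
  have hsplit : {y : Fin (d + 1) → ℝ | ∏ j, y j < t}
      = MeasurableEquiv.piFinSuccAbove (fun _ => ℝ) 0 ⁻¹' {p | p.1 * ∏ j, p.2 j < t} := by
    ext y
    simp [Fin.prod_univ_succAbove y 0, Fin.tail]
  rw [hsplit, (measurePreserving_piFinSuccAbove _ 0).measure_preimage hA.nullMeasurableSet,
    Measure.prod_apply hA]
  refine setLIntegral_congr_fun measurableSet_Ioc fun x hx => ?_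
  congr 1
  ext y
  simp [lt_div_iff₀ hx.1, mul_comm]

theorem measure_pi_prod_lt (d : ℕ) {t : ℝ} (ht : 0 < t) (ht1 : t ≤ 1) :
    𝕌 d {y | ∏ j, y j < t} = ENNReal.ofReal (cdfProdUniform d t) := by
  induction d generalizing t with
  | zero => simp [cdfProdUniform, ht1.not_gt]
  | succ d ih =>
    rw [measure_pi_prod_lt_succ]
    set μ := 𝕌 d
    have hquot : ∀ x ∈ Icc t 1, 0 ≤ t / x ∧ t / x ≤ 1 := fun x hx =>
      ⟨by have := ht.trans_le hx.1; positivity, (div_le_one (ht.trans_le hx.1)).2 hx.1⟩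
    have hsmall : ∫⁻ x in Ioc 0 t, μ {y | ∏ j, y j < t / x} = ENNReal.ofReal t := by
      rw [← Measure.restrict_congr_set Ioo_ae_eq_Ioc, setLIntegral_congr_fun measurableSet_Ioo
        fun x hx => measure_pi_prod_lt_of_one_lt d ((one_lt_div hx.1).2 hx.2), setLIntegral_one,
        Real.volume_Ioo, sub_zero]
    have hlarge : ∫⁻ x in Ioc t 1, μ {y | ∏ j, y j < t / x}
        = ENNReal.ofReal (∫ x in t..1, cdfProdUniform d (t / x)) := by
      have hcont : ContinuousOn (fun x => cdfProdUniform d (t / x)) (Icc t 1) :=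
        (continuousOn_cdfProdUniform d).comp
          (continuousOn_const.div continuousOn_id fun x hx => (ht.trans_le hx.1).ne')
          fun x hx => div_pos ht (ht.trans_le hx.1)
      rw [setLIntegral_congr_fun measurableSet_Ioc fun x hx =>
          ih (div_pos ht (ht.trans hx.1)) (hquot x (Ioc_subset_Icc_self hx)).2,
        intervalIntegral.integral_of_le ht1, ofReal_integral_eq_lintegral_ofReal
          (hcont.integrableOn_Icc.mono_set Ioc_subset_Icc_self)]
      filter_upwards [ae_restrict_mem measurableSet_Ioc] with x hx
      exact cdfProdUniform_nonneg d (hquot x (Ioc_subset_Icc_self hx)).1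
        (hquot x (Ioc_subset_Icc_self hx)).2
    have hint_nonneg : 0 ≤ ∫ x in t..1, cdfProdUniform d (t / x) :=
      intervalIntegral.integral_nonneg ht1 fun x hx =>
        cdfProdUniform_nonneg d (hquot x hx).1 (hquot x hx).2
    rw [← Ioc_union_Ioc_eq_Ioc ht.le ht1,
      lintegral_union measurableSet_Ioc (Ioc_disjoint_Ioc_of_le le_rfl), hsmall, hlarge,
      ← ENNReal.ofReal_add ht.le hint_nonneg, cdfProdUniform_succ d ht]

theorem volume_inter_pi_Icc (d : ℕ) (S : Set (Fin d → ℝ)) :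
    volume (S ∩ univ.pi fun _ => Icc (0 : ℝ) 1) = 𝕌 d S := by
  rw [← Measure.restrict_apply' (MeasurableSet.univ_pi fun _ => measurableSet_Icc), volume_pi,
    Measure.restrict_pi_pi]
  simp_rw [Measure.restrict_congr_set Ioc_ae_eq_Icc]

theorem stmt_16 (d : ℕ) (η : ℝ) (hη : 0 < η) (hη' : η ≤ ((2 : ℝ) ^ d)⁻¹) :
    (volume ({x : Fin d → ℝ | ∀ j, x j ∈ Set.Icc (0 : ℝ) 1} \
        {x : Fin d → ℝ | (∀ j, x j ∈ Set.Icc (0 : ℝ) 1) ∧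
          η ≤ ∏ j, min (x j) (1 - x j)})).toReal
      = 2 ^ d * η *
          ∑ l ∈ Finset.range d, Real.log (((2 : ℝ) ^ d * η)⁻¹) ^ l / (Nat.factorial l) := by
  have h2d : (0 : ℝ) < 2 ^ d := by positivity
  have ht : 0 < 2 ^ d * η := by positivity
  have ht1 : 2 ^ d * η ≤ 1 := by
    simpa [h2d.ne'] using mul_le_mul_of_nonneg_left hη' h2d.le
  have hdiff : {x : Fin d → ℝ | ∀ j, x j ∈ Icc (0 : ℝ) 1} \
      {x | (∀ j, x j ∈ Icc (0 : ℝ) 1) ∧ η ≤ ∏ j, min (x j) (1 - x j)}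
      = (fun x j => tentMap (x j)) ⁻¹' {y | ∏ j, y j < 2 ^ d * η} ∩
          univ.pi fun _ => Icc (0 : ℝ) 1 := by
    ext x
    simp only [mem_sdiff, mem_ofPred_eq, not_and, not_le, mem_inter_iff, mem_preimage, mem_univ_pi,
      tentMap, Finset.prod_mul_distrib, Finset.prod_const, Finset.card_univ, Fintype.card_fin,
      mul_lt_mul_iff_right₀ h2d]
    tauto
  have hmeas : MeasurableSet {y : Fin d → ℝ | ∏ j, y j < 2 ^ d * η} :=
    measurableSet_lt (by fun_prop) measurable_const
  rw [hdiff, volume_inter_pi_Icc, (measurePreserving_pi _ _ fun _ =>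
      measurePreserving_tentMap).measure_preimage hmeas.nullMeasurableSet,
    measure_pi_prod_lt d ht ht1, ENNReal.toReal_ofReal (cdfProdUniform_nonneg d ht.le ht1),
    cdfProdUniform]
end

section
/- Let P ⊆ ℝ^d be a d-simplex or d-parallelotope, let x be in the relative interior of P, and let H⁺ ⊆ ℝ^d be a closed half-space with x on its boundary. Then there exists a vertex v of P such that the parallelotope P^v(x) (spanned at v by the scaled edge vectors determined by x) is contained in P ∩ H⁺. In particular, when P = [0,1]^d and x ∈ (0,1)^d, one has μ_d(P ∩ H⁺) ≥ ∏_{j=1}^d |x_j − v_j| for some vertex v ∈ {0,1}^d. -/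
/-!
An invertible affine change of coordinates `λ ↦ v₀ + ∑ j, λ j • w j` carries vertices, edges,
interiors, vertex boxes and half-spaces `{y | f y ≤ f x}` to objects of the same kind, so it
suffices to treat the corner simplex `{λ | 0 ≤ λ, ∑ j, λ j ≤ 1}` and the unit cube `[0, 1]^ι`.
Write `eⱼ` for the standard basis. In the cube take the vertex `a` with `a j = 0` if
`f (eⱼ) ≥ 0` and `a j = 1` otherwise: moving each coordinate of `ξ` towards `a j` does not
increase `f`, so the box between `a` and `ξ` lies in the half-space, and it has volume
`∏ j, |ξ j - a j|`. In the simplex the vertex `0` works in the same way when all `f (eⱼ) ≥ 0`;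
otherwise, if `f (eₖ)` is minimal and negative, the affine symmetry of the simplex exchanging
`0` and `eₖ` reduces to that case.
-/

open Set MeasureTheory

section Affine

variable {ι E F : Type*} [Fintype ι] [AddCommGroup E] [Module ℝ E] [AddCommGroup F] [Module ℝ F]

/-- The parallelotope `P^v(x)` of the paper, for `x = v + ∑ j, t j • w j`. -/
def vertexBox (v : E) (w : ι → E) (t : ι → ℝ) : Set E :=
  {y | ∃ mu : ι → ℝ, (∀ j, mu j ∈ Icc (0 : ℝ) 1) ∧ y = v + ∑ j, (mu j * t j) • w j}

variable (ι) in
def HasVertexBox (P : Set E) (x : E) (H : Set E) : Prop :=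
  ∃ (v : E) (w : ι → E) (t : ι → ℝ), v ∈ P.extremePoints ℝ ∧
    (∀ j, v + w j ∈ P.extremePoints ℝ) ∧ LinearIndependent ℝ w ∧ (∀ j, t j ∈ Ioo (0 : ℝ) 1) ∧
    x = v + ∑ j, t j • w j ∧ vertexBox v w t ⊆ P ∩ H

def halfspace (f : E →ₗ[ℝ] ℝ) (x : E) : Set E := {y | f y ≤ f x}

namespace AffineEquiv

theorem image_extremePoints (A : E ≃ᵃ[ℝ] F) (s : Set E) :
    A '' s.extremePoints ℝ = (A '' s).extremePoints ℝ := by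
  ext b
  obtain ⟨a, rfl⟩ := A.surjective b
  have hseg : ∀ x y, A '' openSegment ℝ x y = openSegment ℝ (A x) (A y) :=
    image_openSegment _ A.toAffineMap
  simp only [mem_extremePoints, A.surjective.forall, A.injective.mem_set_image,
    A.injective.eq_iff, ← hseg]

theorem map_add (A : E ≃ᵃ[ℝ] F) (v z : E) : A (v + z) = A v + A.linear z := by
  rw [add_comm v, ← vadd_eq_add, A.map_vadd, vadd_eq_add, add_comm]

theorem map_add_sum (A : E ≃ᵃ[ℝ] F) (v : E) (c : ι → ℝ) (w : ι → E) :
    A (v + ∑ j, c j • w j) = A v + ∑ j, c j • A.linear (w j) := by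
  simp only [A.map_add, map_sum, map_smul]

theorem image_vertexBox (A : E ≃ᵃ[ℝ] F) (v : E) (w : ι → E) (t : ι → ℝ) :
    A '' vertexBox v w t = vertexBox (A v) (A.linear ∘ w) t := by
  ext y
  simp only [vertexBox, mem_image, mem_ofPred_eq, Function.comp_apply, ← A.map_add_sum]
  constructor
  · rintro ⟨_, ⟨mu, hmu, rfl⟩, rfl⟩
    exact ⟨mu, hmu, rfl⟩
  · rintro ⟨mu, hmu, rfl⟩
    exact ⟨_, ⟨mu, hmu, rfl⟩, rfl⟩

theorem preimage_halfspace (A : E ≃ᵃ[ℝ] F) (f : F →ₗ[ℝ] ℝ) (x : E) :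
    A ⁻¹' halfspace f (A x) = halfspace (f ∘ₗ A.linear.toLinearMap) x := by
  ext y
  have hy : A y = A x + A.linear (y - x) := by rw [← A.map_add, add_sub_cancel]
  simp only [halfspace, mem_preimage, mem_ofPred_eq, LinearMap.coe_comp, Function.comp_apply,
    LinearEquiv.coe_coe, hy, _root_.map_add, map_sub]
  constructor <;> intro h <;> linarith

theorem image_interior {E F : Type*} [NormedAddCommGroup E] [NormedSpace ℝ E]
    [FiniteDimensional ℝ E] [NormedAddCommGroup F] [NormedSpace ℝ F] [FiniteDimensional ℝ F]
    (A : E ≃ᵃ[ℝ] F) (s : Set E) : A '' interior s = interior (A '' s) :=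
  A.toContinuousAffineEquiv.toHomeomorph.image_interior s

end AffineEquiv

theorem HasVertexBox.map {P : Set E} {x : E} {H : Set F} (A : E ≃ᵃ[ℝ] F)
    (h : HasVertexBox ι P x (A ⁻¹' H)) : HasVertexBox ι (A '' P) (A x) H := by
  obtain ⟨v, w, t, hv, hvw, hw, ht, rfl, hbox⟩ := h
  refine ⟨A v, A.linear ∘ w, t, ?_, fun j => ?_, hw.map' _ A.linear.ker, ht,
    A.map_add_sum v t w, ?_⟩
  · rw [← A.image_extremePoints]
    exact mem_image_of_mem A hv
  · rw [← A.image_extremePoints, Function.comp_apply, ← A.map_add]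
    exact mem_image_of_mem A (hvw j)
  · rw [← A.image_vertexBox, ← image_inter_preimage]
    exact image_mono hbox

theorem HasVertexBox.map_halfspace {P : Set E} {x : E} (A : E ≃ᵃ[ℝ] F) (f : F →ₗ[ℝ] ℝ)
    (h : HasVertexBox ι P x (halfspace (f ∘ₗ A.linear.toLinearMap) x)) :
    HasVertexBox ι (A '' P) (A x) (halfspace f (A x)) :=
  HasVertexBox.map A (by rwa [A.preimage_halfspace])

theorem exists_affineEquiv_apply_eq [FiniteDimensional ℝ E] {w : ι → E}
    (hw : LinearIndependent ℝ w) (hcard : Fintype.card ι = Module.finrank ℝ E) (v₀ : E) :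
    ∃ A : (ι → ℝ) ≃ᵃ[ℝ] E, ∀ lam, A lam = v₀ + ∑ j, lam j • w j :=
  ⟨(basisOfLinearIndependentOfCardEqFinrank' w hw hcard).equivFun.symm.toAffineEquiv.trans
    (AffineEquiv.constVAdd ℝ E v₀), fun lam => by simp⟩

end Affine

section Coordinates

variable {ι : Type*}

theorem mem_Icc_of_eq_zero_or_one {a : ι → ℝ} (h : ∀ j, a j = 0 ∨ a j = 1) :
    a ∈ Icc (0 : ι → ℝ) 1 :=
  ⟨fun j => by rcases h j with h | h <;> simp [h], fun j => by rcases h j with h | h <;> simp [h]⟩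

theorem mem_extremePoints_of_subset_Icc {S : Set (ι → ℝ)} (hS : S ⊆ Icc 0 1) {a : ι → ℝ}
    (ha01 : ∀ j, a j = 0 ∨ a j = 1) (ha : a ∈ S) : a ∈ S.extremePoints ℝ := by
  refine inter_extremePoints_subset_extremePoints_of_subset hS ⟨ha, ?_⟩
  rw [← pi_univ_Icc, extremePoints_pi]
  intro j _
  simpa [extremePoints_Icc zero_le_one] using ha01 j

theorem update_one_sub_eq_zero_or_one [DecidableEq ι] {a : ι → ℝ}
    (ha01 : ∀ j, a j = 0 ∨ a j = 1) (j i : ι) :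
    Function.update a j (1 - a j) i = 0 ∨ Function.update a j (1 - a j) i = 1 := by
  rcases eq_or_ne i j with rfl | hij
  · rcases ha01 i with h | h <;> simp [h]
  · simpa [hij] using ha01 i

noncomputable def cubeVertex [DecidableEq ι] (f : (ι → ℝ) →ₗ[ℝ] ℝ) : ι → ℝ :=
  fun j => if 0 ≤ f (Pi.single j 1) then 0 else 1

theorem cubeVertex_eq_zero_or_one [DecidableEq ι] (f : (ι → ℝ) →ₗ[ℝ] ℝ) (j : ι) :
    cubeVertex f j = 0 ∨ cubeVertex f j = 1 := by
  unfold cubeVertex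
  split_ifs <;> simp

variable [Fintype ι]

theorem mem_Ioo_of_mem_interior_of_subset_Icc {S : Set (ι → ℝ)} (hS : S ⊆ Icc 0 1)
    {ξ : ι → ℝ} (hξ : ξ ∈ interior S) (j : ι) : ξ j ∈ Ioo 0 1 := by
  have h := interior_mono hS hξ
  rw [← pi_univ_Icc, interior_pi_set finite_univ] at h
  simpa using h j (mem_univ j)

variable (ι) in
def cornerSimplex : Set (ι → ℝ) := {lam | (∀ j, 0 ≤ lam j) ∧ ∑ j, lam j ≤ 1}

theorem cornerSimplex_subset_Icc : cornerSimplex ι ⊆ Icc 0 1 := fun _ ⟨h0, h1⟩ =>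
  ⟨h0, fun j => (Finset.single_le_sum (fun i _ => h0 i) (Finset.mem_univ j)).trans h1⟩

variable [DecidableEq ι]

theorem LinearMap.apply_eq_sum_mul_single (f : (ι → ℝ) →ₗ[ℝ] ℝ) (z : ι → ℝ) :
    f z = ∑ i, z i * f (Pi.single i 1) := by
  rw [LinearMap.pi_apply_eq_sum_univ f z]
  refine Finset.sum_congr rfl fun i _ => ?_
  rw [smul_eq_mul]
  congr 2
  ext j
  simp [Pi.single_apply, eq_comm]

theorem hasVertexBox_of_uIcc_subset {S H : Set (ι → ℝ)} (hS : S ⊆ Icc 0 1) {a ξ : ι → ℝ}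
    (ha01 : ∀ j, a j = 0 ∨ a j = 1) (ha : a ∈ S)
    (hedge : ∀ j, Function.update a j (1 - a j) ∈ S) (hξ : ξ ∈ interior S)
    (hbox : uIcc a ξ ⊆ S ∩ H) : HasVertexBox ι S ξ H := by
  have hξ01 := mem_Ioo_of_mem_interior_of_subset_Icc hS hξ
  have hσ : ∀ j, 1 - 2 * a j ≠ 0 := fun j => by rcases ha01 j with h | h <;> norm_num [h]
  have hcoord : ∀ i, |ξ i - a i| * (1 - 2 * a i) = ξ i - a i := fun i => by
    obtain ⟨h0, h1⟩ := hξ01 i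
    rcases ha01 i with h | h
    · simp [h, abs_of_pos h0]
    · rw [h, abs_of_neg (by linarith)]
      ring
  refine ⟨a, fun j => (1 - 2 * a j) • Pi.single j 1, fun j => |ξ j - a j|,
    mem_extremePoints_of_subset_Icc hS ha01 ha, fun j => ?_, ?_, fun j => ?_, ?_, ?_⟩
  · have hneighbour : a + (1 - 2 * a j) • Pi.single j 1 = Function.update a j (1 - a j) := by
      ext i
      rcases eq_or_ne i j with rfl | hij
      · simp only [Pi.add_apply, Pi.smul_apply, Pi.single_eq_same, smul_eq_mul, mul_one,
          Function.update_self]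
        ring
      · simp [hij]
    rw [hneighbour]
    exact mem_extremePoints_of_subset_Icc hS (update_one_sub_eq_zero_or_one ha01 j) (hedge j)
  · exact (Pi.linearIndependent_single_one ι ℝ).units_smul fun j => Units.mk0 _ (hσ j)
  · obtain ⟨h0, h1⟩ := hξ01 j
    rcases ha01 j with h | h <;> simp [h, abs_of_pos, abs_of_neg, h0, h1]
  · ext i
    simp [Finset.sum_apply, Pi.single_apply, hcoord]
  · rintro y ⟨mu, hmu, rfl⟩
    apply hbox
    rw [← pi_univ_uIcc]
    intro i _
    simp only [Pi.add_apply, Finset.sum_apply, Pi.smul_apply, Pi.single_apply, smul_eq_mul,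
      mul_ite, mul_one, mul_zero, mul_assoc, hcoord, Finset.sum_ite_eq, Finset.mem_univ,
      if_true]
    exact (convex_uIcc (a i) (ξ i)).add_smul_sub_mem left_mem_uIcc right_mem_uIcc (hmu i)

theorem uIcc_cubeVertex_subset_halfspace (f : (ι → ℝ) →ₗ[ℝ] ℝ) {ξ : ι → ℝ}
    (hξ : ξ ∈ Icc 0 1) : uIcc (cubeVertex f) ξ ⊆ halfspace f ξ := by
  intro y hy
  rw [← pi_univ_uIcc] at hy
  rw [halfspace, mem_ofPred_eq, ← sub_nonneg, ← map_sub, LinearMap.apply_eq_sum_mul_single]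
  refine Finset.sum_nonneg fun i _ => ?_
  have hyi := hy i (mem_univ i)
  rw [Pi.sub_apply]
  simp only [cubeVertex] at hyi
  split_ifs at hyi with h
  · have h0 : (0 : ℝ) ≤ ξ i := hξ.1 i
    rw [uIcc_of_le h0] at hyi
    exact mul_nonneg (sub_nonneg.2 hyi.2) h
  · have h1 : ξ i ≤ 1 := hξ.2 i
    rw [uIcc_of_ge h1] at hyi
    exact mul_nonneg_of_nonpos_of_nonpos (sub_nonpos.2 hyi.1) (le_of_not_ge h)

theorem uIcc_cubeVertex_subset (f : (ι → ℝ) →ₗ[ℝ] ℝ) {ξ : ι → ℝ} (hξ : ξ ∈ Icc 0 1) :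
    uIcc (cubeVertex f) ξ ⊆ Icc 0 1 ∩ halfspace f ξ :=
  subset_inter (uIcc_subset_Icc (mem_Icc_of_eq_zero_or_one (cubeVertex_eq_zero_or_one f)) hξ)
    (uIcc_cubeVertex_subset_halfspace f hξ)

theorem hasVertexBox_Icc (f : (ι → ℝ) →ₗ[ℝ] ℝ) {ξ : ι → ℝ} (hξ : ξ ∈ interior (Icc 0 1)) :
    HasVertexBox ι (Icc 0 1) ξ (halfspace f ξ) := by
  have ha := cubeVertex_eq_zero_or_one f
  exact hasVertexBox_of_uIcc_subset subset_rfl ha (mem_Icc_of_eq_zero_or_one ha)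
    (fun j => mem_Icc_of_eq_zero_or_one (update_one_sub_eq_zero_or_one ha j)) hξ
    (uIcc_cubeVertex_subset f (interior_subset hξ))

theorem exists_vertex_prod_abs_sub_le_volume {x : ι → ℝ} (hx : x ∈ Icc 0 1)
    (f : (ι → ℝ) →ₗ[ℝ] ℝ) : ∃ v : ι → ℝ, (∀ j, v j = 0 ∨ v j = 1) ∧
      ∏ j, |x j - v j| ≤ (volume (Icc 0 1 ∩ halfspace f x)).toReal := by
  refine ⟨cubeVertex f, cubeVertex_eq_zero_or_one f, ?_⟩
  have hfin : volume (Icc (0 : ι → ℝ) 1 ∩ halfspace f x) ≠ ⊤ :=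
    ((measure_mono inter_subset_left).trans_lt isCompact_Icc.measure_lt_top).ne
  calc ∏ j, |x j - cubeVertex f j| = (volume (uIcc (cubeVertex f) x)).toReal := by
        rw [uIcc, Real.volume_Icc_pi_toReal inf_le_sup]
        simp [max_sub_min_eq_abs]
    _ ≤ _ := ENNReal.toReal_mono hfin (measure_mono (uIcc_cubeVertex_subset f hx))

theorem hasVertexBox_cornerSimplex_of_nonneg {f : (ι → ℝ) →ₗ[ℝ] ℝ}
    (hf : ∀ j, 0 ≤ f (Pi.single j 1)) {ξ : ι → ℝ} (hξ : ξ ∈ interior (cornerSimplex ι)) :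
    HasVertexBox ι (cornerSimplex ι) ξ (halfspace f ξ) := by
  have hξS := interior_subset hξ
  have h0 : cubeVertex f = 0 := funext fun j => if_pos (hf j)
  refine hasVertexBox_of_uIcc_subset cornerSimplex_subset_Icc (a := 0) (fun j => Or.inl rfl)
    ⟨fun _ => le_rfl, by simp⟩ (fun j => ⟨fun i => ?_, ?_⟩) hξ (subset_inter ?_ ?_)
  · rw [Function.update_apply]
    split_ifs <;> norm_num
  · simp [Finset.sum_update_of_mem]
  · rw [uIcc_of_le hξS.1]
    exact fun y hy => ⟨hy.1, (Finset.sum_le_sum fun j _ => hy.2 j).trans hξS.2⟩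
  · exact h0 ▸ (uIcc_cubeVertex_subset f (cornerSimplex_subset_Icc hξS)).trans
      inter_subset_right

/-- The affine symmetry of `cornerSimplex ι` exchanging the vertices `0` and `Pi.single k 1`. -/
noncomputable def simplexReflection (k : ι) : (ι → ℝ) ≃ᵃ[ℝ] (ι → ℝ) :=
  (Module.reflection (x := Pi.single k 1)
    (f := (LinearMap.proj k : (ι → ℝ) →ₗ[ℝ] ℝ) + ∑ j, LinearMap.proj j)
    (by simp; norm_num)).toAffineEquiv.trans (AffineEquiv.constVAdd ℝ (ι → ℝ) (Pi.single k 1))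

theorem simplexReflection_apply (k : ι) (lam : ι → ℝ) :
    simplexReflection k lam = Function.update lam k (1 - ∑ j, lam j) := by
  ext i
  rcases eq_or_ne i k with rfl | hik
  · simp only [simplexReflection, AffineEquiv.trans_apply, LinearEquiv.coe_toAffineEquiv,
      Module.reflection_apply, LinearMap.add_apply, LinearMap.coe_proj, Function.eval,
      LinearMap.coe_sum, Finset.sum_apply, AffineEquiv.constVAdd_apply, Pi.vadd_apply',
      Pi.single_eq_same, Pi.sub_apply, Pi.smul_apply, smul_eq_mul, mul_one, vadd_eq_add,
      Function.update_self]
    ring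
  · simp [simplexReflection, Module.reflection_apply, hik]

theorem sum_simplexReflection (k : ι) (lam : ι → ℝ) :
    ∑ j, simplexReflection k lam j = 1 - lam k := by
  rw [simplexReflection_apply, Finset.sum_update_of_mem (Finset.mem_univ k),
    ← Finset.sum_erase_add _ _ (Finset.mem_univ k)]
  simp [Finset.sdiff_singleton_eq_erase]

theorem simplexReflection_involutive (k : ι) :
    Function.Involutive (simplexReflection k) := fun lam => by
  rw [simplexReflection_apply k (simplexReflection k lam), sum_simplexReflection,
    simplexReflection_apply]
  simp

theorem image_simplexReflection (k : ι) :
    simplexReflection k '' cornerSimplex ι = cornerSimplex ι := by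
  have hmaps : MapsTo (simplexReflection k) (cornerSimplex ι) (cornerSimplex ι) := by
    rintro lam ⟨h0, h1⟩
    refine ⟨fun i => ?_, ?_⟩
    · rw [simplexReflection_apply]
      rcases eq_or_ne i k with rfl | hik
      · simpa using h1
      · simpa [hik] using h0 i
    · rw [sum_simplexReflection]
      linarith [h0 k]
  exact Subset.antisymm hmaps.image_subset fun lam h =>
    ⟨_, hmaps h, simplexReflection_involutive k lam⟩

theorem simplexReflection_linear_single (k j : ι) :
    (simplexReflection k).linear (Pi.single j 1) =
      (if j = k then 0 else Pi.single j 1) - Pi.single k 1 := by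
  have h := (simplexReflection k).map_add 0 (Pi.single j 1)
  rw [zero_add, simplexReflection_apply, simplexReflection_apply, ← sub_eq_iff_eq_add'] at h
  rw [← h]
  ext i
  rcases eq_or_ne j k with rfl | hjk
  · by_cases hij : i = j <;> simp [hij]
  · rcases eq_or_ne i k with rfl | hik
    · simp [hjk]
    · by_cases hij : i = j <;> simp [hij, hik, hjk]

theorem hasVertexBox_cornerSimplex (f : (ι → ℝ) →ₗ[ℝ] ℝ) {ξ : ι → ℝ}
    (hξ : ξ ∈ interior (cornerSimplex ι)) :
    HasVertexBox ι (cornerSimplex ι) ξ (halfspace f ξ) := by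
  by_cases hf : ∀ j, 0 ≤ f (Pi.single j 1)
  · exact hasVertexBox_cornerSimplex_of_nonneg hf hξ
  push Not at hf
  obtain ⟨k₀, hk₀⟩ := hf
  obtain ⟨k, -, hk⟩ := Finset.exists_min_image Finset.univ (fun j => f (Pi.single j 1))
    ⟨k₀, Finset.mem_univ k₀⟩
  have hneg : f (Pi.single k 1) < 0 := (hk k₀ (Finset.mem_univ k₀)).trans_lt hk₀
  set R := simplexReflection k
  have hRS : R '' cornerSimplex ι = cornerSimplex ι := image_simplexReflection k
  have hRξ : R ξ ∈ interior (cornerSimplex ι) := by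
    rw [← hRS, ← R.image_interior]
    exact mem_image_of_mem R hξ
  have hg : ∀ j, 0 ≤ (f ∘ₗ R.linear.toLinearMap) (Pi.single j 1) := by
    intro j
    have hmin := hk j (Finset.mem_univ j)
    rcases eq_or_ne j k with rfl | hjk
    · simp only [LinearMap.coe_comp, LinearEquiv.coe_coe, Function.comp_apply, R,
        simplexReflection_linear_single, if_true, zero_sub, map_neg]
      linarith
    · simp only [LinearMap.coe_comp, LinearEquiv.coe_coe, Function.comp_apply, R,
        simplexReflection_linear_single, if_neg hjk, map_sub]
      linarith
  have h := (hasVertexBox_cornerSimplex_of_nonneg hg hRξ).map_halfspace R f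
  rwa [hRS, simplexReflection_involutive] at h

end Coordinates

theorem stmt_17_general (d : ℕ) (P : Set (Fin d → ℝ))
    (v₀ : Fin d → ℝ) (w : Fin d → (Fin d → ℝ)) (hw : LinearIndependent ℝ w)
    (hP : P = {y | ∃ lam : Fin d → ℝ, (∀ j, 0 ≤ lam j) ∧ (∑ j, lam j) ≤ 1 ∧
            y = v₀ + ∑ j, lam j • w j}
        ∨ P = {y | ∃ lam : Fin d → ℝ, (∀ j, lam j ∈ Set.Icc (0 : ℝ) 1) ∧
            y = v₀ + ∑ j, lam j • w j})
    (x : Fin d → ℝ) (hx : x ∈ interior P)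
    (u : Fin d → ℝ) :
    (∃ (v : Fin d → ℝ) (w' : Fin d → (Fin d → ℝ)) (t : Fin d → ℝ),
      v ∈ P.extremePoints ℝ ∧ (∀ j, v + w' j ∈ P.extremePoints ℝ) ∧
      LinearIndependent ℝ w' ∧ (∀ j, t j ∈ Set.Ioo (0 : ℝ) 1) ∧
      x = v + ∑ j, t j • w' j ∧
      {y | ∃ mu : Fin d → ℝ, (∀ j, mu j ∈ Set.Icc (0 : ℝ) 1) ∧
          y = v + ∑ j, (mu j * t j) • w' j}
        ⊆ P ∩ {y | ∑ j, u j * y j ≤ ∑ j, u j * x j})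
    ∧ (P = {y : Fin d → ℝ | ∀ j, y j ∈ Set.Icc (0 : ℝ) 1} →
        ∃ v : Fin d → ℝ, (∀ j, v j = 0 ∨ v j = 1) ∧
          ∏ j, |x j - v j|
            ≤ (volume (P ∩ {y : Fin d → ℝ | ∑ j, u j * y j ≤ ∑ j, u j * x j})).toReal) := by
  have hcube : {y : Fin d → ℝ | ∀ j, y j ∈ Icc (0 : ℝ) 1} = Icc 0 1 := by
    ext y
    simp [Pi.le_def, forall_and]
  refine ⟨?_, fun hPcube => ?_⟩
  · obtain ⟨A, hA⟩ := exists_affineEquiv_apply_eq hw (by simp) v₀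
    obtain ⟨S, rfl, hS⟩ : ∃ S, P = A '' S ∧
        ∀ ξ ∈ interior S, ∀ f, HasVertexBox (Fin d) S ξ (halfspace f ξ) := by
      rcases hP with rfl | rfl
      · refine ⟨cornerSimplex _, ?_, fun ξ hξ f => hasVertexBox_cornerSimplex f hξ⟩
        ext y
        simp [cornerSimplex, hA, and_assoc, eq_comm]
      · refine ⟨Icc 0 1, ?_, fun ξ hξ f => hasVertexBox_Icc f hξ⟩
        rw [← hcube]
        ext y
        simp [hA, eq_comm]
    obtain ⟨ξ, hξ, rfl⟩ : x ∈ A '' interior S := by rwa [A.image_interior]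
    exact (hS ξ hξ _).map_halfspace A (dotProductBilin ℝ ℝ u)
  · rw [hPcube, hcube] at hx ⊢
    exact exists_vertex_prod_abs_sub_le_volume (interior_subset hx) (dotProductBilin ℝ ℝ u)

theorem stmt_17 (d : ℕ) (hd : 0 < d) (P : Set (Fin d → ℝ))
    (v₀ : Fin d → ℝ) (w : Fin d → (Fin d → ℝ)) (hw : LinearIndependent ℝ w)
    (hP : P = {y | ∃ lam : Fin d → ℝ, (∀ j, 0 ≤ lam j) ∧ (∑ j, lam j) ≤ 1 ∧
            y = v₀ + ∑ j, lam j • w j}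
        ∨ P = {y | ∃ lam : Fin d → ℝ, (∀ j, lam j ∈ Set.Icc (0 : ℝ) 1) ∧
            y = v₀ + ∑ j, lam j • w j})
    (x : Fin d → ℝ) (hx : x ∈ interior P)
    (u : Fin d → ℝ) (hu : u ≠ 0) :
    (∃ (v : Fin d → ℝ) (w' : Fin d → (Fin d → ℝ)) (t : Fin d → ℝ),
      v ∈ P.extremePoints ℝ ∧ (∀ j, v + w' j ∈ P.extremePoints ℝ) ∧
      LinearIndependent ℝ w' ∧ (∀ j, t j ∈ Set.Ioo (0 : ℝ) 1) ∧
      x = v + ∑ j, t j • w' j ∧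
      {y | ∃ mu : Fin d → ℝ, (∀ j, mu j ∈ Set.Icc (0 : ℝ) 1) ∧
          y = v + ∑ j, (mu j * t j) • w' j}
        ⊆ P ∩ {y | ∑ j, u j * y j ≤ ∑ j, u j * x j})
    ∧ (P = {y : Fin d → ℝ | ∀ j, y j ∈ Set.Icc (0 : ℝ) 1} →
        ∃ v : Fin d → ℝ, (∀ j, v j = 0 ∨ v j = 1) ∧
          ∏ j, |x j - v j|
            ≤ (volume (P ∩ {y : Fin d → ℝ | ∑ j, u j * y j ≤ ∑ j, u j * x j})).toReal) :=
  stmt_17_general d P v₀ w hw hP x hx u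
end

section
/- Let f(x) = (2π)^{−d/2} e^{−‖x‖²/2} be the standard Gaussian density on ℝ^d and fix β ≥ 1. Then for all x ∈ ℝ^d, ‖∇f(x)‖ ≤ β^{1/2} e^{−1/2} (2π)^{−d/(2β)} f(x)^{1 − 1/β}. -/
/-!
Since `∇f(x) = -x f(x)`, the claim amounts to `‖x‖ ≤ √β e^{-1/2} e^{‖x‖²/(2β)}`, the factor
`e^{‖x‖²/(2β)}` being what `(2π)^{-d/(2β)} f(x)^{-1/β}` reduces to. Squared, this is
`t ≤ e^{t-1}` for `t = ‖x‖²/β`.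
-/

open Real RealInnerProductSpace

theorem hasGradientAt_const_mul_exp_neg_norm_sq_div_two {E : Type*} [NormedAddCommGroup E]
    [InnerProductSpace ℝ E] [CompleteSpace E] (c : ℝ) (x : E) :
    HasGradientAt (fun y : E => c * exp (-‖y‖ ^ 2 / 2)) (-(c * exp (-‖x‖ ^ 2 / 2)) • x) x := by
  have hfun : (fun y : E => c * exp (-‖y‖ ^ 2 / 2)) = fun y => c * exp (-1 / 2 * ‖y‖ ^ 2) := by
    ext y; ring_nf
  rw [hfun, hasGradientAt_iff_hasFDerivAt]
  refine (((hasStrictFDerivAt_norm_sq x).hasFDerivAt.const_mul (-1 / 2 : ℝ)).exp.const_mul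
    c).congr_fderiv ?_
  ext v
  simp only [smul_apply, innerSL_apply_apply, InnerProductSpace.toDual_apply_apply,
    smul_eq_mul, real_inner_smul_left]
  ring_nf

theorem le_rpow_mul_exp_sq_div {β : ℝ} (hβ : 0 < β) (r : ℝ) :
    r ≤ β ^ ((1 : ℝ) / 2) * exp (-(1 : ℝ) / 2) * exp (r ^ 2 / (2 * β)) := by
  have hsq : (β ^ ((1 : ℝ) / 2) * exp (-(1 : ℝ) / 2) * exp (r ^ 2 / (2 * β))) ^ 2
      = β * exp (r ^ 2 / β - 1) := by
    rw [← sqrt_eq_rpow, mul_pow, mul_pow, sq_sqrt hβ.le, ← exp_nat_mul, ← exp_nat_mul,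
      mul_assoc, ← exp_add]
    congr 2
    field_simp
    ring
  refine le_of_sq_le_sq ?_ (by positivity)
  rw [hsq, ← div_le_iff₀' hβ]
  linarith [add_one_le_exp (r ^ 2 / β - 1)]

noncomputable def stdGaussianDensity (d : ℕ) (x : EuclideanSpace ℝ (Fin d)) : ℝ :=
  (2 * π) ^ (-(d : ℝ) / 2) * exp (-‖x‖ ^ 2 / 2)

theorem stdGaussianDensity_pos (d : ℕ) (x : EuclideanSpace ℝ (Fin d)) :
    0 < stdGaussianDensity d x := by
  unfold stdGaussianDensity; positivity

theorem norm_gradient_stdGaussianDensity (d : ℕ) (x : EuclideanSpace ℝ (Fin d)) :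
    ‖gradient (stdGaussianDensity d) x‖ = stdGaussianDensity d x * ‖x‖ := by
  have h : HasGradientAt (stdGaussianDensity d) (-stdGaussianDensity d x • x) x :=
    hasGradientAt_const_mul_exp_neg_norm_sq_div_two _ x
  rw [h.gradient, norm_smul, norm_neg, Real.norm_of_nonneg (stdGaussianDensity_pos d x).le]

theorem rpow_mul_stdGaussianDensity_rpow_one_sub_inv (d : ℕ) {β : ℝ} (hβ : β ≠ 0)
    (x : EuclideanSpace ℝ (Fin d)) :
    (2 * π) ^ (-(d : ℝ) / (2 * β)) * stdGaussianDensity d x ^ (1 - 1 / β)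
      = stdGaussianDensity d x * exp (‖x‖ ^ 2 / (2 * β)) := by
  have h2π : 0 < 2 * π := by positivity
  unfold stdGaussianDensity
  rw [mul_rpow (by positivity) (exp_pos _).le, ← rpow_mul h2π.le, ← exp_mul, ← mul_assoc,
    ← rpow_add h2π, mul_assoc, ← exp_add]
  congr 2 <;> field_simp <;> ring

theorem stmt_18 (d : ℕ) (β : ℝ) (hβ : 1 ≤ β) (x : EuclideanSpace ℝ (Fin d)) :
    ‖gradient (fun y : EuclideanSpace ℝ (Fin d) =>
        (2 * Real.pi) ^ (-(d : ℝ) / 2) * Real.exp (-‖y‖ ^ 2 / 2)) x‖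
      ≤ β ^ ((1 : ℝ) / 2) * Real.exp (-(1 : ℝ) / 2) * (2 * Real.pi) ^ (-(d : ℝ) / (2 * β))
          * ((2 * Real.pi) ^ (-(d : ℝ) / 2) * Real.exp (-‖x‖ ^ 2 / 2)) ^ (1 - 1 / β) := by
  have hβ₀ : 0 < β := zero_lt_one.trans_le hβ
  change ‖gradient (stdGaussianDensity d) x‖
    ≤ β ^ ((1 : ℝ) / 2) * exp (-(1 : ℝ) / 2) * (2 * π) ^ (-(d : ℝ) / (2 * β))
      * stdGaussianDensity d x ^ (1 - 1 / β)
  calc ‖gradient (stdGaussianDensity d) x‖ = stdGaussianDensity d x * ‖x‖ :=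
        norm_gradient_stdGaussianDensity d x
    _ ≤ stdGaussianDensity d x
          * (β ^ ((1 : ℝ) / 2) * exp (-(1 : ℝ) / 2) * exp (‖x‖ ^ 2 / (2 * β))) :=
        mul_le_mul_of_nonneg_left (le_rpow_mul_exp_sq_div hβ₀ ‖x‖)
          (stdGaussianDensity_pos d x).le
    _ = _ := by
        rw [mul_assoc _ ((2 * π) ^ _), rpow_mul_stdGaussianDensity_rpow_one_sub_inv d hβ₀.ne']
        ring
end

section
/- Fix β ∈ (1, 2] and L > 0, and let g : ℝ^d → [0,∞) be differentiable with ‖∇g(y) − ∇g(x)‖ ≤ L‖y − x‖^{β−1} for all x, y ∈ ℝ^d. Then for all x ∈ ℝ^d, ‖∇g(x)‖ ≤ Λ · g(x)^{1 − 1/β}, where Λ = L^{1/β} (1 − 1/β)^{−1+1/β}. -/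
/-!
Hölder continuity of the gradient gives the descent inequality
`g (x + v) ≤ g x + ⟪∇g x, v⟫ + (L / β) ‖v‖^β`, obtained by showing that the difference of the two
sides along `t ↦ x + t v` is antitone. Stepping a distance `r` against the gradient and using
`g ≥ 0` yields `r ‖∇g x‖ ≤ g x + (L / β) r^β` for every `r ≥ 0`; the choice `L r^(β-1) = ‖∇g x‖`
optimizes this Young-type inequality and gives the bound.
-/

open Real Set

section HolderGradient

variable {E : Type*} [NormedAddCommGroup E] [InnerProductSpace ℝ E] [CompleteSpace E]

lemma hasDerivAt_comp_add_smul {f : E → ℝ} (hf : Differentiable ℝ f) (x v : E) (t : ℝ) :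
    HasDerivAt (fun t : ℝ => f (x + t • v)) (inner ℝ (gradient f (x + t • v)) v) t := by
  have hline : HasDerivAt (fun t : ℝ => x + t • v) v t := by
    simpa using ((hasDerivAt_id t).smul_const v).const_add x
  simpa [InnerProductSpace.toDual_apply_apply, Function.comp_def] using
    (hf _).hasGradientAt.hasFDerivAt.comp_hasDerivAt t hline

lemma inner_gradient_sub_le_of_holder {f : E → ℝ} {β L : ℝ} (hβ : 1 ≤ β)
    (hhold : ∀ x y, ‖gradient f y - gradient f x‖ ≤ L * ‖y - x‖ ^ (β - 1))
    (x v : E) {t : ℝ} (ht : 0 ≤ t) :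
    inner ℝ (gradient f (x + t • v) - gradient f x) v ≤ L * ‖v‖ ^ β * t ^ (β - 1) :=
  calc inner ℝ (gradient f (x + t • v) - gradient f x) v
      ≤ ‖gradient f (x + t • v) - gradient f x‖ * ‖v‖ := real_inner_le_norm _ _
    _ ≤ L * ‖x + t • v - x‖ ^ (β - 1) * ‖v‖ := by gcongr; exact hhold _ _
    _ = L * ‖v‖ ^ β * t ^ (β - 1) := by
      rw [add_sub_cancel_left, norm_smul, norm_of_nonneg ht, mul_rpow ht (norm_nonneg v),
        ← sub_add_cancel β 1, rpow_add' (norm_nonneg v) (by linarith), sub_add_cancel, rpow_one]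
      ring

theorem le_add_inner_add_rpow_of_holder_gradient {f : E → ℝ} {β L : ℝ} (hβ : 1 ≤ β)
    (hf : Differentiable ℝ f)
    (hhold : ∀ x y, ‖gradient f y - gradient f x‖ ≤ L * ‖y - x‖ ^ (β - 1)) (x v : E) :
    f (x + v) ≤ f x + inner ℝ (gradient f x) v + L / β * ‖v‖ ^ β := by
  set φ : ℝ → ℝ := fun t =>
    f (x + t • v) - t * inner ℝ (gradient f x) v - L / β * ‖v‖ ^ β * t ^ β with hφ
  have hφ' : ∀ t, HasDerivAt φ (inner ℝ (gradient f (x + t • v) - gradient f x) v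
      - L * ‖v‖ ^ β * t ^ (β - 1)) t := by
    intro t
    have := ((hasDerivAt_comp_add_smul hf x v t).sub ((hasDerivAt_id t).mul_const
      (inner ℝ (gradient f x) v))).sub ((hasDerivAt_rpow_const (Or.inr hβ)).const_mul
      (L / β * ‖v‖ ^ β))
    refine this.congr_deriv ?_
    rw [inner_sub_left]
    field_simp
  have hanti : AntitoneOn φ (Ici 0) := by
    refine antitoneOn_of_hasDerivWithinAt_nonpos (convex_Ici 0)
      (fun t _ => (hφ' t).continuousAt.continuousWithinAt) (fun t _ => (hφ' t).hasDerivWithinAt)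
      fun t ht => ?_
    rw [interior_Ici] at ht
    exact sub_nonpos.2 (inner_gradient_sub_le_of_holder hβ hhold x v (le_of_lt ht))
  have := hanti self_mem_Ici (mem_Ici.2 zero_le_one) zero_le_one
  simp only [hφ, zero_smul, add_zero, zero_mul, sub_zero, one_smul, one_mul, one_rpow, mul_one,
    zero_rpow (by linarith : β ≠ 0)] at this
  linarith

end HolderGradient

theorem le_of_forall_mul_le_add_rpow {β L a G : ℝ} (hβ : 1 < β) (hL : 0 < L)
    (h : ∀ r, 0 ≤ r → r * a ≤ G + L / β * r ^ β) :
    a ≤ L ^ (1 / β) * (1 - 1 / β) ^ (-1 + 1 / β) * G ^ (1 - 1 / β) := by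
  have hG : 0 ≤ G := by simpa [zero_rpow (by linarith : β ≠ 0)] using h 0 le_rfl
  have hc : 0 < 1 - 1 / β := by
    have : 1 / β < 1 := (div_lt_one (by linarith)).2 hβ
    linarith
  rcases le_or_gt a 0 with ha | ha
  · exact ha.trans (by positivity)
  set c := 1 - 1 / β
  -- the optimal step `r`, characterised by `a = L r^(β-1)`
  set r := (a / L) ^ (β - 1)⁻¹
  have hr : 0 < r := by positivity
  have har : a = L * r ^ (β - 1) := by
    rw [rpow_inv_rpow (by positivity) (by linarith)]
    field_simp
  have key : c * (L * r ^ β) ≤ G :=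
    calc c * (L * r ^ β) = r * a - L / β * r ^ β := by
          rw [har, rpow_sub_one hr.ne']; simp only [c]; field_simp
      _ ≤ G := by linarith [h r hr.le]
  calc a = L ^ (1 / β) * c ^ (-1 + 1 / β) * (c * (L * r ^ β)) ^ (1 - 1 / β) := by
        rw [mul_rpow hc.le (by positivity), mul_rpow hL.le (by positivity), ← rpow_mul hr.le]
        have hexp : β * (1 - 1 / β) = β - 1 := by field_simp
        calc a = L ^ (1 / β + (1 - 1 / β)) * c ^ (-1 + 1 / β + (1 - 1 / β)) * r ^ (β - 1) := by
              rw [show 1 / β + (1 - 1 / β) = 1 by ring, show -1 + 1 / β + (1 - 1 / β) = 0 by ring,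
                rpow_one, rpow_zero, mul_one, har]
          _ = _ := by rw [rpow_add hL, rpow_add hc, hexp]; ring
    _ ≤ L ^ (1 / β) * c ^ (-1 + 1 / β) * G ^ (1 - 1 / β) := by gcongr

theorem stmt_19_general (d : ℕ) (β L : ℝ) (hβ1 : 1 < β) (hL : 0 < L)
    (g : EuclideanSpace ℝ (Fin d) → ℝ) (hg0 : ∀ x, 0 ≤ g x)
    (hgd : Differentiable ℝ g)
    (hhold : ∀ x y : EuclideanSpace ℝ (Fin d),
      ‖gradient g y - gradient g x‖ ≤ L * ‖y - x‖ ^ (β - 1)) :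
    ∀ x : EuclideanSpace ℝ (Fin d),
      ‖gradient g x‖ ≤ L ^ ((1 : ℝ) / β) * (1 - 1 / β) ^ (-1 + 1 / β) * g x ^ (1 - 1 / β) := by
  intro x
  refine le_of_forall_mul_le_add_rpow hβ1 hL fun r hr => ?_
  rcases (norm_nonneg (gradient g x)).eq_or_lt with ha | ha
  · rw [← ha, mul_zero]
    have := hg0 x
    positivity
  have hdescent := le_add_inner_add_rpow_of_holder_gradient hβ1.le hgd hhold x
    (-(r / ‖gradient g x‖) • gradient g x)
  rw [inner_smul_right, real_inner_self_eq_norm_sq, norm_smul, norm_neg, norm_div, norm_norm,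
    norm_of_nonneg hr, div_mul_cancel₀ r ha.ne'] at hdescent
  have hstep : -(r / ‖gradient g x‖) * ‖gradient g x‖ ^ 2 = -(r * ‖gradient g x‖) := by
    field_simp
  linarith [hg0 (x + -(r / ‖gradient g x‖) • gradient g x)]

theorem stmt_19 (d : ℕ) (β L : ℝ) (hβ1 : 1 < β) (hβ2 : β ≤ 2) (hL : 0 < L)
    (g : EuclideanSpace ℝ (Fin d) → ℝ) (hg0 : ∀ x, 0 ≤ g x)
    (hgd : Differentiable ℝ g)
    (hhold : ∀ x y : EuclideanSpace ℝ (Fin d),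
      ‖gradient g y - gradient g x‖ ≤ L * ‖y - x‖ ^ (β - 1)) :
    ∀ x : EuclideanSpace ℝ (Fin d),
      ‖gradient g x‖ ≤ L ^ ((1 : ℝ) / β) * (1 - 1 / β) ^ (-1 + 1 / β) * g x ^ (1 - 1 / β) :=
  stmt_19_general d β L hβ1 hL g hg0 hgd hhold
end
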